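/- arXiv:2201.11151 — 3 statements merged into one kernel-verified Lean document; each statement's English description precedes it below -/
import Mathlib

section
/- Let n ≥ 2 be even and let t = n/2 + s with 1 ≤ s ≤ n/2. Then the t-graph Γ(2,n,t) of the dihedral group D_n has exactly 4(s − 1) + 2 connected components. -/
/-- The `t`-graph `Γ(m,n,t)`: vertices are `Fin m × Fin n` (the vertex `(i,j)` encoding
`a^i b^j`), and two distinct vertices `(i,j)`, `(k,l)` are adjacent iff
`|i - k| + |j - l| = t` (comparing coordinates as integers). -/
def tGraph (m n t : ℕ) : SimpleGraph (Fin m × Fin n) where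
  Adj x y := x ≠ y ∧ |(x.1 : ℤ) - (y.1 : ℤ)| + |(x.2 : ℤ) - (y.2 : ℤ)| = t
  symm := ⟨by
    rintro x y ⟨h1, h2⟩
    exact ⟨h1.symm, by rw [abs_sub_comm ((y.1 : ℤ)), abs_sub_comm ((y.2 : ℤ))]; exact h2⟩⟩
  loopless := ⟨fun x ⟨h, _⟩ => h rfl⟩

instance (m n t : ℕ) : DecidableRel (tGraph m n t).Adj := fun x y =>
  inferInstanceAs (Decidable (x ≠ y ∧ |(x.1 : ℤ) - (y.1 : ℤ)| + |(x.2 : ℤ) - (y.2 : ℤ)| = t))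

/-!
Write `(i, j)` for row `i` and column `j`. Adjacent columns differ by `t` (same row) or `t - 1`
(other row). A column `j` with `n - t < j < t - 1` is closer than `t - 1` to every column, so its
`2 * (2 * t - n - 2)` vertices are isolated. Since `2 * t ≥ n + 2`, every other column is either
low (`j + t ≤ n`) or high (`t ≤ j + 1`) but not both, every edge joins a low vertex to a high one,
and `i + j`, shifted by `t` on high vertices, keeps its parity along edges. Conversely the path
`(i, j + 1) — (1 - i, j + t) — (1 - i, j)` lets every low vertex descend to column `0` and every
high vertex has a low neighbour, so the non-isolated vertices form exactly two components,
distinguished by that parity.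
-/

namespace SimpleGraph

variable {V α : Type*} (G : SimpleGraph V)

theorem card_connectedComponent_eq_card_of_label [Fintype G.ConnectedComponent] [Fintype α]
    (f : V → α) (hadj : ∀ x y, G.Adj x y → f x = f y)
    (hreach : ∀ x y, f x = f y → G.Reachable x y) (hsurj : Function.Surjective f) :
    Fintype.card G.ConnectedComponent = Fintype.card α := by
  have hconst (x y : V) (h : G.Reachable x y) : f x = f y := by
    rw [reachable_iff_reflTransGen] at h
    induction h with
    | refl => rfl
    | tail _ hab ih => exact ih.trans (hadj _ _ hab)
  refine Fintype.card_congr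
    (Equiv.ofBijective (ConnectedComponent.lift f fun x y p _ => hconst x y ⟨p⟩) ⟨?_, ?_⟩)
  · refine ConnectedComponent.ind₂ fun x y hxy => ?_
    exact ConnectedComponent.sound (hreach x y hxy)
  · intro a
    obtain ⟨x, rfl⟩ := hsurj a
    exact ⟨G.connectedComponentMk x, rfl⟩

end SimpleGraph

namespace tGraph

variable {n t : ℕ}

theorem two_adj_iff (ht : 1 ≤ t) (x y : Fin 2 × Fin n) :
    (tGraph 2 n t).Adj x y ↔
      (x.1 = y.1 ∧ ((x.2 : ℕ) + t = y.2 ∨ (y.2 : ℕ) + t = x.2)) ∨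
      (x.1 ≠ y.1 ∧ ((x.2 : ℕ) + t = y.2 + 1 ∨ (y.2 : ℕ) + t = x.2 + 1)) := by
  obtain ⟨⟨a, ha⟩, ⟨b, hb⟩⟩ := x
  obtain ⟨⟨c, hc⟩, ⟨e, he⟩⟩ := y
  simp only [tGraph, ne_eq, Prod.ext_iff, Fin.ext_iff, Int.abs_eq_natAbs]
  omega

def IsIsolatedColumn (n t j : ℕ) : Prop := n < j + t ∧ j + 1 < t

instance (n t j : ℕ) : Decidable (IsIsolatedColumn n t j) :=
  inferInstanceAs (Decidable (_ ∧ _))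

def parity (n t : ℕ) (x : Fin 2 × Fin n) : Fin 2 :=
  ⟨((x.1 : ℕ) + x.2 + if (x.2 : ℕ) + t ≤ n then 0 else t) % 2, Nat.mod_lt _ two_pos⟩

def componentLabel (n t : ℕ) (x : Fin 2 × Fin n) : Fin 2 × Fin (2 * t - n - 2) ⊕ Fin 2 :=
  if hx : IsIsolatedColumn n t x.2 then
    .inl (x.1, ⟨x.2 + t - (n + 1), by unfold IsIsolatedColumn at hx; omega⟩)
  else .inr (parity n t x)

theorem not_isIsolatedColumn_of_adj (ht : 1 ≤ t) {x y : Fin 2 × Fin n}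
    (hxy : (tGraph 2 n t).Adj x y) : ¬IsIsolatedColumn n t x.2 := by
  rw [two_adj_iff ht] at hxy
  unfold IsIsolatedColumn
  omega

theorem parity_eq_of_adj (hnt : n + 2 ≤ 2 * t) {x y : Fin 2 × Fin n}
    (hxy : (tGraph 2 n t).Adj x y) : parity n t x = parity n t y := by
  rw [two_adj_iff (by omega)] at hxy
  simp only [parity, Fin.ext_iff]
  split_ifs <;> omega

theorem componentLabel_eq_of_adj (hnt : n + 2 ≤ 2 * t) {x y : Fin 2 × Fin n}
    (hxy : (tGraph 2 n t).Adj x y) : componentLabel n t x = componentLabel n t y := by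
  rw [componentLabel, componentLabel, dif_neg (not_isIsolatedColumn_of_adj (by omega) hxy),
    dif_neg (not_isIsolatedColumn_of_adj (by omega) hxy.symm), parity_eq_of_adj hnt hxy]

theorem reachable_of_row_ne_of_succ_col (ht : 1 ≤ t) {x y : Fin 2 × Fin n} (hrow : x.1 ≠ y.1)
    (hcol : (y.2 : ℕ) + 1 = x.2) (hx : (x.2 : ℕ) + t ≤ n) : (tGraph 2 n t).Reachable x y := by
  let w : Fin 2 × Fin n := (y.1, ⟨x.2 + t - 1, by omega⟩)
  have hxw : (tGraph 2 n t).Adj x w := by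
    rw [two_adj_iff ht]
    exact .inr ⟨hrow, .inl (by simp only [w]; omega)⟩
  have hwy : (tGraph 2 n t).Adj w y := by
    rw [two_adj_iff ht]
    exact .inl ⟨rfl, .inr (by simp only [w]; omega)⟩
  exact hxw.reachable.trans hwy.reachable

theorem reachable_zero_of_add_le (ht : 1 ≤ t) (x : Fin 2 × Fin n) (hx : (x.2 : ℕ) + t ≤ n) :
    (tGraph 2 n t).Reachable x (parity n t x, ⟨0, x.2.pos⟩) := by
  obtain ⟨i, j, hj⟩ := x
  dsimp only at hx
  induction j generalizing i with
  | zero =>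
    have hi : parity n t (i, ⟨0, hj⟩) = i := by
      simp only [parity, Fin.ext_iff]
      rw [if_pos hx]
      omega
    rw [hi]
  | succ j ih =>
    have hrow : i ≠ i.rev := by simp only [ne_eq, Fin.ext_iff, Fin.val_rev]; omega
    have hpar : parity n t (i.rev, ⟨j, by omega⟩) = parity n t (i, ⟨j + 1, hj⟩) := by
      simp only [parity, Fin.ext_iff, Fin.val_rev]
      rw [if_pos (by omega), if_pos hx]
      omega
    have hstep := reachable_of_row_ne_of_succ_col ht (x := (i, ⟨j + 1, hj⟩))
      (y := (i.rev, ⟨j, by omega⟩)) hrow rfl hx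
    simpa only [hpar] using hstep.trans (ih i.rev (by omega) (by omega))

theorem reachable_zero (hnt : n + 2 ≤ 2 * t) (x : Fin 2 × Fin n)
    (hx : ¬IsIsolatedColumn n t x.2) :
    (tGraph 2 n t).Reachable x (parity n t x, ⟨0, x.2.pos⟩) := by
  by_cases hlow : (x.2 : ℕ) + t ≤ n
  · exact reachable_zero_of_add_le (by omega) x hlow
  unfold IsIsolatedColumn at hx
  let y : Fin 2 × Fin n := (x.1.rev, ⟨x.2 + 1 - t, by omega⟩)
  have hxy : (tGraph 2 n t).Adj x y := by
    rw [two_adj_iff (by omega)]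
    refine .inr ⟨?_, .inr (by simp only [y]; omega)⟩
    simp only [y, ne_eq, Fin.ext_iff, Fin.val_rev]
    omega
  rw [parity_eq_of_adj hnt hxy]
  exact hxy.reachable.trans (reachable_zero_of_add_le (by omega) y (by simp only [y]; omega))

theorem reachable_of_componentLabel_eq (hnt : n + 2 ≤ 2 * t) {x y : Fin 2 × Fin n}
    (hxy : componentLabel n t x = componentLabel n t y) : (tGraph 2 n t).Reachable x y := by
  unfold componentLabel at hxy
  split_ifs at hxy with hx hy hy
  · have hxy : x = y := by
      simp only [Sum.inl.injEq, Prod.mk.injEq, Fin.mk.injEq] at hxy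
      unfold IsIsolatedColumn at hx hy
      ext <;> omega
    rw [hxy]
  · have hxy : parity n t x = parity n t y := Sum.inr_injective hxy
    exact (reachable_zero hnt x hx).trans (hxy ▸ reachable_zero hnt y hy).symm

theorem componentLabel_surjective (hnt : n + 2 ≤ 2 * t) (htn : t ≤ n) :
    Function.Surjective (componentLabel n t) := by
  rintro (⟨i, k, hk⟩ | c)
  · refine ⟨(i, ⟨k + n + 1 - t, by omega⟩), ?_⟩
    rw [componentLabel, dif_pos (by dsimp only [IsIsolatedColumn]; omega)]
    simp only [Sum.inl.injEq, Prod.mk.injEq, Fin.mk.injEq, true_and]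
    omega
  · refine ⟨(c, ⟨0, by omega⟩), ?_⟩
    rw [componentLabel, dif_neg (by dsimp only [IsIsolatedColumn]; omega)]
    simp only [parity, Sum.inr.injEq, Fin.ext_iff, zero_add, if_pos htn]
    omega

theorem card_connectedComponent_two (hnt : n + 2 ≤ 2 * t) (htn : t ≤ n) :
    Fintype.card (tGraph 2 n t).ConnectedComponent = 2 * (2 * t - n - 2) + 2 := by
  rw [(tGraph 2 n t).card_connectedComponent_eq_card_of_label (componentLabel n t)
    (fun _ _ => componentLabel_eq_of_adj hnt) (fun _ _ => reachable_of_componentLabel_eq hnt)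
    (componentLabel_surjective hnt htn)]
  simp

end tGraph

theorem dihedral_tGraph_components_of_even_n_general (n s t : ℕ) (hneven : Even n)
    (hs : 1 ≤ s) (hsub : s ≤ n / 2) (ht : t = n / 2 + s) :
    Fintype.card (tGraph 2 n t).ConnectedComponent = 4 * (s - 1) + 2 := by
  obtain ⟨h, rfl⟩ := hneven
  rw [tGraph.card_connectedComponent_two (by omega) (by omega)]
  omega

/-- For even `n ≥ 2` and `t = n/2 + s` with `1 ≤ s ≤ n/2`, the `t`-graph `Γ(2,n,t)` of the
dihedral group `D_n` has exactly `4(s - 1) + 2` connected components. -/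
theorem dihedral_tGraph_components_of_even_n (n s t : ℕ) (hn : 2 ≤ n) (hneven : Even n)
    (hs : 1 ≤ s) (hsub : s ≤ n / 2) (ht : t = n / 2 + s) :
    Fintype.card (tGraph 2 n t).ConnectedComponent = 4 * (s - 1) + 2 :=
  dihedral_tGraph_components_of_even_n_general n s t hneven hs hsub ht
end

section
/- Let n ≥ 2 and let t satisfy ⌈n/2⌉ < t ≤ n. Then the t-graph Γ(2,n,t) of the dihedral group D_n has exactly 4t − 2n − 4 isolated vertices (vertices of degree 0). -/
/-! A vertex `(i, j)` of `Γ(2,n,t)` with `t ≥ 1` has a neighbour in the other row as soon as some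
column lies at distance `t - 1` from `j`, while a neighbour in its own row needs a column at the
larger distance `t`. So `(i, j)` is isolated exactly when `n - t < j < t - 1`, and the isolated
vertices fill `2 (2t - n - 2)` cells. -/

open Finset SimpleGraph

lemma tGraph_adj_iff_of_pos {m n t : ℕ} (ht : 0 < t) {x y : Fin m × Fin n} :
    (tGraph m n t).Adj x y ↔ ((x.1 : ℤ) - y.1).natAbs + ((x.2 : ℤ) - y.2).natAbs = t := by
  simp only [tGraph, Int.abs_eq_natAbs]
  refine ⟨fun h => by exact_mod_cast h.2, fun h => ⟨?_, by exact_mod_cast h⟩⟩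
  rintro rfl
  simp only [sub_self, Int.natAbs_zero, add_zero] at h
  omega

lemma tGraph_two_degree_eq_zero_iff {n t : ℕ} (ht : 0 < t) (v : Fin 2 × Fin n) :
    (tGraph 2 n t).degree v = 0 ↔ n < v.2 + t ∧ v.2 + 2 ≤ t := by
  simp_rw [degree_eq_zero_iff_notMem_support, mem_support, not_exists, tGraph_adj_iff_of_pos ht]
  obtain ⟨⟨i, hi⟩, ⟨j, hj⟩⟩ := v
  dsimp only
  constructor
  · intro hisolated
    by_contra! hcol
    obtain ⟨l, hl, hdist⟩ : ∃ l < n, ((j : ℤ) - l).natAbs + 1 = t := by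
      by_cases hright : j + t ≤ n
      · exact ⟨j + t - 1, by omega, by omega⟩
      · exact ⟨j + 1 - t, by omega, by omega⟩
    exact hisolated (⟨1 - i, by omega⟩, ⟨l, hl⟩) (by simp only; omega)
  · rintro ⟨hright, hleft⟩ ⟨⟨k, hk⟩, ⟨l, hl⟩⟩ hdist
    simp only at hdist
    omega

lemma Fin.card_filter_le_and_le {n a b : ℕ} (hb : b < n) :
    #{j : Fin n | a ≤ j ∧ j ≤ b} = b + 1 - a := by
  rw [← card_map Fin.valEmbedding, ← Nat.card_Icc]
  congr 1
  ext j
  simp only [mem_map, mem_filter, mem_univ, true_and, Fin.valEmbedding_apply, mem_Icc]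
  exact ⟨fun ⟨j', hj', hj⟩ => hj ▸ hj', fun hj => ⟨⟨j, by omega⟩, hj, rfl⟩⟩

theorem dihedral_tGraph_card_isolated_vertices_general (n t : ℕ)
    (htlb : (n + 1) / 2 < t) (htn : t ≤ n) :
    (Finset.univ.filter fun v : Fin 2 × Fin n => (tGraph 2 n t).degree v = 0).card =
      4 * t - 2 * n - 4 := by
  have hcol (j : ℕ) : n < j + t ∧ j + 2 ≤ t ↔ n + 1 - t ≤ j ∧ j ≤ t - 2 := by omega
  simp_rw [tGraph_two_degree_eq_zero_iff (show 0 < t by omega), hcol, ← univ_product_univ]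
  rw [filter_product_right (fun j : Fin n => n + 1 - t ≤ j ∧ j ≤ t - 2), card_product,
    Fin.card_filter_le_and_le (show t - 2 < n by omega), card_univ, Fintype.card_fin]
  omega

/-- For `n ≥ 2` and `⌈n/2⌉ < t ≤ n`, the `t`-graph `Γ(2,n,t)` of the dihedral group `D_n`
has exactly `4t - 2n - 4` isolated vertices (vertices of degree 0). -/
theorem dihedral_tGraph_card_isolated_vertices (n t : ℕ) (hn : 2 ≤ n)
    (htlb : (n + 1) / 2 < t) (htn : t ≤ n) :
    (Finset.univ.filter fun v : Fin 2 × Fin n => (tGraph 2 n t).degree v = 0).card =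
      4 * t - 2 * n - 4 :=
  dihedral_tGraph_card_isolated_vertices_general n t htlb htn
end

section
/- Let n ≥ 2 be even and set t = n/2 + 1. Then the t-graph Γ(2,n,t) of the dihedral group D_n is isomorphic to the disjoint union of two path graphs, each on n vertices; in particular it has exactly 2 connected components, which are isomorphic path graphs. -/
/-! Write `n = 2m`, so `t = m + 1`: within a row the neighbours of column `j` are `j ± (m + 1)`,
across the rows they are `j ± m`. The zigzag `(0,m), (1,0), (1,m+1), (0,1), (0,m+2), (1,2), …`
alternates steps of these two kinds and visits every column exactly once; its mirror image under
swapping the rows is a second such path, and no edge joins the two. Together they cover all `2n`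
vertices, so the two paths embed the disjoint union onto the whole graph. -/

open SimpleGraph

namespace SimpleGraph

variable {V W X : Type*} {G : SimpleGraph V} {H : SimpleGraph W} {K : SimpleGraph X}

def Embedding.sumElim (f : G ↪g K) (g : H ↪g K) (hne : ∀ v w, f v ≠ g w)
    (hadj : ∀ v w, ¬K.Adj (f v) (g w)) : G ⊕g H ↪g K where
  toFun := Sum.elim f g
  inj' := f.injective.sumElim g.injective hne
  map_rel_iff' := by
    rintro (v | w) (v' | w')
    · simp
    · simpa using hadj v w'
    · simpa using fun h => hadj v' w h.symm
    · simp

lemma Connected.natCard_connectedComponent_sum (hG : G.Connected) (hH : H.Connected) :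
    Nat.card (G ⊕g H).ConnectedComponent = 2 := by
  obtain ⟨v⟩ := hG.nonempty
  obtain ⟨w⟩ := hH.nonempty
  refine Nat.card_eq_two_iff.mpr ⟨(G ⊕g H).connectedComponentMk (.inl v),
    (G ⊕g H).connectedComponentMk (.inr w), ?_, ?_⟩
  · simpa [ConnectedComponent.eq] using not_reachable_sum_inl_inr v w
  · ext c
    induction c using ConnectedComponent.ind with
    | h u =>
      rcases u with v' | w'
      · simpa [ConnectedComponent.eq] using
          Or.inl ((hG.preconnected v' v).map Embedding.sumInl.toHom)
      · simpa [ConnectedComponent.eq] using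
          Or.inr ((hH.preconnected w' w).map Embedding.sumInr.toHom)

end SimpleGraph

lemma tGraph_adj_iff {m n t : ℕ} {x y : Fin m × Fin n} :
    (tGraph m n t).Adj x y ↔
      x ≠ y ∧ ((x.1 : ℤ) - y.1).natAbs + ((x.2 : ℤ) - y.2).natAbs = t := by
  simp only [tGraph, Int.abs_eq_natAbs]
  norm_cast

def tGraph.revRows (m n t : ℕ) : tGraph m n t ≃g tGraph m n t where
  toEquiv := Fin.revPerm.prodCongr (Equiv.refl _)
  map_rel_iff' := by
    intro x y
    simp only [tGraph_adj_iff, Equiv.prodCongr_apply, Fin.revPerm_apply, Equiv.refl_apply,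
      Prod.map, ne_eq, Prod.ext_iff, Fin.ext_iff, Fin.val_rev]
    omega

def zigzag (m : ℕ) (k : Fin (m + m)) : Fin 2 × Fin (m + m) :=
  (⟨(k + 1) / 2 % 2, by omega⟩,
    ⟨if k.val % 2 = 0 then m + k / 2 else k / 2, by split_ifs <;> omega⟩)

lemma zigzag_injective (m : ℕ) : Function.Injective (zigzag m) := by
  intro k l h
  simp only [zigzag, Prod.ext_iff, Fin.ext_iff] at h
  ext
  split_ifs at h <;> omega

lemma tGraph_adj_zigzag (m : ℕ) (k l : Fin (m + m)) :
    (tGraph 2 (m + m) (m + 1)).Adj (zigzag m k) (zigzag m l) ↔ (pathGraph (m + m)).Adj k l := by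
  simp only [tGraph_adj_iff, zigzag, pathGraph_adj, ne_eq, Prod.ext_iff, Fin.ext_iff]
  split_ifs <;> omega

section revRows_zigzag

variable (m : ℕ) (k l : Fin (m + m))

lemma zigzag_ne_revRows_zigzag :
    zigzag m k ≠ tGraph.revRows 2 (m + m) (m + 1) (zigzag m l) := by
  simp only [tGraph.revRows, zigzag, RelIso.coe_fn_mk, Equiv.prodCongr_apply, Fin.revPerm_apply,
    Equiv.refl_apply, Prod.map, ne_eq, Prod.ext_iff, Fin.ext_iff, Fin.val_rev]
  split_ifs <;> omega

lemma not_tGraph_adj_zigzag_revRows_zigzag :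
    ¬(tGraph 2 (m + m) (m + 1)).Adj (zigzag m k)
      (tGraph.revRows 2 (m + m) (m + 1) (zigzag m l)) := by
  simp only [tGraph_adj_iff, tGraph.revRows, zigzag, RelIso.coe_fn_mk, Equiv.prodCongr_apply,
    Fin.revPerm_apply, Equiv.refl_apply, Prod.map, ne_eq, Prod.ext_iff, Fin.ext_iff, Fin.val_rev]
  split_ifs <;> omega

end revRows_zigzag

def zigzagEmbedding (m : ℕ) : pathGraph (m + m) ↪g tGraph 2 (m + m) (m + 1) :=
  ⟨⟨zigzag m, zigzag_injective m⟩, tGraph_adj_zigzag m _ _⟩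

def twoZigzagsEmbedding (m : ℕ) :
    pathGraph (m + m) ⊕g pathGraph (m + m) ↪g tGraph 2 (m + m) (m + 1) :=
  (zigzagEmbedding m).sumElim
    ((zigzagEmbedding m).trans (tGraph.revRows 2 (m + m) (m + 1)).toEmbedding)
    (zigzag_ne_revRows_zigzag m) (not_tGraph_adj_zigzag_revRows_zigzag m)

noncomputable def twoZigzagsIso (m : ℕ) :
    pathGraph (m + m) ⊕g pathGraph (m + m) ≃g tGraph 2 (m + m) (m + 1) :=
  have hcard :
      Fintype.card (Fin (m + m) ⊕ Fin (m + m)) = Fintype.card (Fin 2 × Fin (m + m)) := by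
    simp only [Fintype.card_sum, Fintype.card_prod, Fintype.card_fin]
    omega
  RelIso.ofSurjective (twoZigzagsEmbedding m) <|
    ((Fintype.bijective_iff_injective_and_card _).mpr
      ⟨(twoZigzagsEmbedding m).injective, hcard⟩).surjective

/-- For even `n ≥ 2` and `t = n/2 + 1`, the `t`-graph `Γ(2,n,t)` of the dihedral group
`D_n` is isomorphic to the disjoint union of two path graphs on `n` vertices each; in
particular it has exactly 2 connected components, which are isomorphic path graphs. -/
theorem dihedral_tGraph_iso_two_paths (n t : ℕ) (hn : 2 ≤ n) (hneven : Even n)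
    (ht : t = n / 2 + 1) :
    Nonempty (tGraph 2 n t ≃g (SimpleGraph.pathGraph n ⊕g SimpleGraph.pathGraph n)) ∧
      Fintype.card (tGraph 2 n t).ConnectedComponent = 2 := by
  obtain ⟨m, rfl⟩ := hneven
  obtain rfl : t = m + 1 := by omega
  have hpath : (pathGraph (m + m)).Connected :=
    (connected_iff _).mpr ⟨pathGraph_preconnected _, ⟨⟨0, by omega⟩⟩⟩
  refine ⟨⟨(twoZigzagsIso m).symm⟩, ?_⟩
  rw [← Nat.card_eq_fintype_card, ← Nat.card_congr (twoZigzagsIso m).connectedComponentEquiv]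
  exact hpath.natCard_connectedComponent_sum hpath
end
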